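/- Define sequences q_k(s,z) by q_{-1} = 0, q_0 = 1 and q_k = (k/2 - s) q_{k-2} + q_{k-1} for even k ≥ 2, q_k = ((k-1)/2) q_{k-2} + z · q_{k-1} for odd k ≥ 1. Then for every nonnegative integer k, q_{2k}(s,z) = k! · L_k^{(-s)}(-z) and q_{2k+1}(s,z) = k! · z · L_k^{(1-s)}(-z). -/

import Mathlib

/-!
Write $L_k^{(α)}(w) = \sum_{i+j=k} (-1)^j \binom{k+α}{i} w^j/j!$. Pascal's rule gives
$L_{k+1}^{(α+1)} = L_k^{(α+1)} + L_{k+1}^{(α)}$, and splitting $k+1 = i+j$ in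
$(k+1)L_{k+1}^{(α)}$, then absorbing $i$ into the binomial and $j$ into $j!$, gives
$(k+1)L_{k+1}^{(α)} = (k+1+α)L_k^{(α)} - wL_k^{(α+1)}$. At $α = -s$, $w = -z$ these two
identities are exactly the even and odd steps of the recurrence for $q$, so the formulas
propagate by induction on $k$.
-/

open Finset

/-- Generalized binomial coefficient C(x, k) = x(x-1)⋯(x-k+1)/k!. -/
noncomputable def gbinom (x : ℂ) (k : ℕ) : ℂ :=
  (∏ j ∈ Finset.range k, (x - j)) / (k.factorial : ℂ)

/-- Generalized Laguerre polynomial L_i^{(α)}(z) = Σ_{j=0}^i (-1)^j C(i+α, i-j) z^j / j!. -/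
noncomputable def lag (i : ℕ) (α z : ℂ) : ℂ :=
  ∑ j ∈ Finset.range (i + 1), (-1 : ℂ) ^ j * gbinom ((i : ℂ) + α) (i - j) * z ^ j / (j.factorial : ℂ)

theorem Ring.succ_mul_choose_succ {R : Type*} [Ring R] [BinomialRing R] (x : R) (n : ℕ) :
    ((n : R) + 1) * Ring.choose x (n + 1) = x * Ring.choose (x - 1) n := by
  simpa [Ring.choose_one_right, nsmul_eq_mul] using Ring.choose_smul_choose x (Nat.le_add_left 1 n)

open Polynomial in
theorem gbinom_eq_choose (x : ℂ) (k : ℕ) : gbinom x k = Ring.choose x k := by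
  rw [Ring.choose_eq_smul, ← aeval_eq_smeval, aeval_def, ← eval_map, descPochhammer_map,
    descPochhammer_eval_eq_prod_range, gbinom, smul_eq_mul, div_eq_inv_mul]

theorem lag_eq_sum_antidiagonal (k : ℕ) (α w : ℂ) :
    lag k α w = ∑ p ∈ antidiagonal k,
      (-1) ^ p.2 * Ring.choose ((k : ℂ) + α) p.1 * w ^ p.2 / (p.2.factorial : ℂ) := by
  rw [← Nat.sum_antidiagonal_swap, Nat.sum_antidiagonal_eq_sum_range_succ_mk, lag]
  simp only [Prod.swap_prod_mk, gbinom_eq_choose]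

theorem lag_succ_add_one (k : ℕ) (α w : ℂ) :
    lag (k + 1) (α + 1) w = lag k (α + 1) w + lag (k + 1) α w := by
  simp only [lag_eq_sum_antidiagonal, Nat.sum_antidiagonal_succ, Nat.cast_add_one,
    Ring.choose_zero_right]
  have hx : (k : ℂ) + 1 + (α + 1) = (k + 1 + α) + 1 := by ring
  have hx' : (k : ℂ) + (α + 1) = k + 1 + α := by ring
  simp only [hx, hx', Ring.choose_succ_succ, mul_add, add_mul, add_div, sum_add_distrib]
  ring

theorem succ_mul_lag_succ (k : ℕ) (α w : ℂ) :
    ((k : ℂ) + 1) * lag (k + 1) α w = ((k : ℂ) + 1 + α) * lag k α w - w * lag k (α + 1) w := by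
  set x : ℂ := k + 1 + α
  set t : ℕ × ℕ → ℂ := fun p => (-1) ^ p.2 * Ring.choose x p.1 * w ^ p.2 / (p.2.factorial : ℂ)
  have hsplit : ((k : ℂ) + 1) * lag (k + 1) α w =
      ∑ p ∈ antidiagonal (k + 1), (p.1 : ℂ) * t p + ∑ p ∈ antidiagonal (k + 1), (p.2 : ℂ) * t p := by
    rw [← sum_add_distrib, lag_eq_sum_antidiagonal, mul_sum]
    refine sum_congr rfl fun p hp => ?_
    rw [← add_mul, ← Nat.cast_add, mem_antidiagonal.mp hp]
    push_cast
    rfl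
  have hfirst : ∑ p ∈ antidiagonal (k + 1), (p.1 : ℂ) * t p = x * lag k α w := by
    rw [Nat.sum_antidiagonal_succ, lag_eq_sum_antidiagonal, mul_sum]
    simp only [t, Nat.cast_zero, zero_mul, zero_add]
    refine sum_congr rfl fun p _ => ?_
    rw [show (k : ℂ) + α = x - 1 by ring]
    push_cast
    linear_combination ((-1) ^ p.2 * w ^ p.2 / (p.2.factorial : ℂ)) * Ring.succ_mul_choose_succ x p.1
  have hsecond : ∑ p ∈ antidiagonal (k + 1), (p.2 : ℂ) * t p = -(w * lag k (α + 1) w) := by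
    rw [Nat.sum_antidiagonal_succ', lag_eq_sum_antidiagonal, mul_sum, ← sum_neg_distrib]
    simp only [t, Nat.cast_zero, zero_mul, zero_add]
    refine sum_congr rfl fun p _ => ?_
    rw [show (k : ℂ) + (α + 1) = x by ring, Nat.factorial_succ]
    push_cast
    field_simp
    ring
  rw [hsplit, hfirst, hsecond]
  ring

theorem continued_fraction_denominators_are_laguerre (s z : ℂ) (q : ℕ → ℂ)
    (h0 : q 0 = 1) (h1 : q 1 = z)
    (heven : ∀ k, 2 ≤ k → k % 2 = 0 → q k = ((k : ℂ) / 2 - s) * q (k - 2) + q (k - 1))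
    (hodd : ∀ k, 2 ≤ k → k % 2 = 1 → q k = (((k : ℂ) - 1) / 2) * q (k - 2) + z * q (k - 1)) :
    ∀ k : ℕ, q (2 * k) = (k.factorial : ℂ) * lag k (-s) (-z) ∧
      q (2 * k + 1) = (k.factorial : ℂ) * z * lag k (1 - s) (-z) := by
  have hq_even (k : ℕ) : q (2 * (k + 1)) = ((k : ℂ) + 1 - s) * q (2 * k) + q (2 * k + 1) := by
    rw [heven _ (by omega) (by omega), show 2 * (k + 1) - 2 = 2 * k by omega,
      show 2 * (k + 1) - 1 = 2 * k + 1 by omega]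
    push_cast
    ring
  have hq_odd (k : ℕ) :
      q (2 * (k + 1) + 1) = ((k : ℂ) + 1) * q (2 * k + 1) + z * q (2 * (k + 1)) := by
    rw [hodd _ (by omega) (by omega), show 2 * (k + 1) + 1 - 2 = 2 * k + 1 by omega,
      show 2 * (k + 1) + 1 - 1 = 2 * (k + 1) by omega]
    push_cast
    ring
  intro k
  induction k with
  | zero => simp [lag, gbinom, h0, h1]
  | succ k ih =>
    have hA := succ_mul_lag_succ k (-s) (-z)
    have hB := lag_succ_add_one k (-s) (-z)
    rw [neg_add_eq_sub] at hA hB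
    have h_even : q (2 * (k + 1)) = ((k + 1).factorial : ℂ) * lag (k + 1) (-s) (-z) := by
      rw [hq_even, ih.1, ih.2, Nat.factorial_succ]
      push_cast
      linear_combination (-(k.factorial : ℂ)) * hA
    refine ⟨h_even, ?_⟩
    rw [hq_odd, ih.2, h_even, Nat.factorial_succ]
    push_cast
    linear_combination (-((k : ℂ) + 1) * k.factorial * z) * hB
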